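/- Let E and E₁ be finite-dimensional real inner product spaces, A : E → E₁ a surjective linear map with adjoint A*, and let δ > 0 be such that ‖A*w‖ ≥ δ‖w‖ for all w ∈ E₁. Let f ∈ E₁, λ > 0, ν > 0, and let J : E → [0, ∞). For u ∈ E set J_{ω,u}(v) := J(v) + ω‖v − u‖², and assume that for every u ∈ E the function J_{ω,u} is ν-strongly convex and that there exist constants K̃, L̃ ≥ 0 (independent of u) such that ‖ξ‖ ≤ K̃ J_{ω,u}(v) + L̃ whenever ξ is a subgradient of J_{ω,u} at v. Let v̄_u be the unique minimizer of J_{ω,u} on {v ∈ E : Av = f}. Then there exist positive constants C₁ and C₂, depending only on δ, ν, K̃, L̃ and not on u, such that: whenever q_0 ∈ E₁ and the sequences (v_{k,u})_{k≥1}, (q_k)_{k≥1} satisfy that v_{k,u} minimizes v ↦ J_{ω,u}(v) − ⟨q_{k-1}, Av⟩ + λ‖Av − f‖² over E and q_k = q_{k-1} + 2λ(f − A v_{k,u}), one has ‖v_{k,u} − v̄_u‖² ≤ [C₁(1 + ‖q_0‖) + C₂ J_{ω,u}(v̄_u)]·‖A v_{k,u} − f‖ for all k ≥ 1. -/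

import Mathlib

/-!
Write `G = J_{ω,u}`. Optimality of the augmented Lagrangian step makes `A* q_k` a subgradient of
`G` at `v_k`, and a Lagrange multiplier `p` (a subgradient of the value function
`y ↦ inf {G v | A v = y}` at `f`) makes `A* p` a subgradient of `G` at `v̄`. Strong monotonicity
of the subdifferential gives `ν ‖v_k - v̄‖² ≤ ⟪q_k - p, A v_k - f⟫`; in particular this is
nonnegative, so the update `q_k - q_{k-1} = 2λ (f - A v_k)` makes `‖q_k - p‖` nonincreasing and
`‖q_k - p‖ ≤ ‖q_0‖ + ‖p‖`. Finally `δ ‖p‖ ≤ ‖A* p‖ ≤ K̃ G(v̄) + L̃` by the growth condition, which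
is what makes the constants independent of `u`. The growth condition also forces `K̃ > 0` (so that
`C₂ > 0`) as soon as `E ≠ 0`, because the subgradients of a strongly convex function are unbounded.
-/

open RealInnerProductSpace Set Filter Topology Function

theorem ConvexOn.le_of_forall_le_add_sq_mul {E : Type*} [AddCommGroup E] [Module ℝ E]
    {Φ : E → ℝ} (hΦ : ConvexOn ℝ univ Φ) {x w : E} {C : ℝ}
    (h : ∀ t ∈ Ioo (0 : ℝ) 1, Φ x ≤ Φ (x + t • (w - x)) + t ^ 2 * C) : Φ x ≤ Φ w := by
  have hsmall : ∀ t ∈ Ioo (0 : ℝ) 1, Φ x ≤ Φ w + t * C := by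
    rintro t ⟨ht₀, ht₁⟩
    have hconv := hΦ.2 (mem_univ x) (mem_univ w) (sub_nonneg.2 ht₁.le) ht₀.le (by ring)
    rw [show (1 - t) • x + t • w = x + t • (w - x) by module, smul_eq_mul, smul_eq_mul] at hconv
    refine le_of_mul_le_mul_left ?_ ht₀
    nlinarith [h t ⟨ht₀, ht₁⟩]
  have hlim : Tendsto (fun t : ℝ => Φ w + t * C) (𝓝[>] 0) (𝓝 (Φ w)) := by
    have : Continuous (fun t : ℝ => Φ w + t * C) := by fun_prop
    simpa using this.continuousWithinAt (s := Ioi 0) (x := 0) |>.tendsto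
  exact ge_of_tendsto hlim (mem_of_superset (Ioo_mem_nhdsGT one_pos) hsmall)

section Subgradient

variable {E : Type*} [NormedAddCommGroup E] [InnerProductSpace ℝ E] {g : E → ℝ} {m : ℝ}
  {x y : E} {ξ η : E}

def HasSubgradientAt (g : E → ℝ) (ξ x : E) : Prop :=
  ∀ w, g x + ⟪ξ, w - x⟫ ≤ g w

theorem StrongConvexOn.convexOn {s : Set E} (hg : StrongConvexOn s m g) (hm : 0 ≤ m) :
    ConvexOn ℝ s g :=
  strongConvexOn_zero.1 (hg.mono hm)

theorem HasSubgradientAt.add_mul_norm_sub_sq_le (hg : StrongConvexOn univ m g)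
    (hξ : HasSubgradientAt g ξ x) (w : E) :
    g x + ⟪ξ, w - x⟫ + m / 2 * ‖w - x‖ ^ 2 ≤ g w := by
  set Φ : E → ℝ := fun w => g w - ⟪ξ, w - x⟫ - m / 2 * ‖w - x‖ ^ 2
  have hΦ : ConvexOn ℝ univ Φ := by
    refine (((strongConvexOn_iff_convex.1 hg).add ((innerₛₗ ℝ (m • x - ξ)).convexOn
      convex_univ)).add_const (⟪ξ, x⟫ - m / 2 * ‖x‖ ^ 2)).congr fun w _ => ?_
    simp only [Φ, Pi.add_apply, innerₛₗ_apply_apply, norm_sub_sq_real, inner_sub_left,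
      inner_sub_right, real_inner_smul_left, real_inner_comm x w]
    ring
  have hmin : Φ x ≤ Φ w := hΦ.le_of_forall_le_add_sq_mul (C := m / 2 * ‖w - x‖ ^ 2)
    fun t _ => by
      have := hξ (x + t • (w - x))
      simp only [Φ, add_sub_cancel_left, sub_self, inner_zero_right, norm_zero, norm_smul,
        inner_smul_right, Real.norm_eq_abs, mul_pow, sq_abs] at this ⊢
      linarith
  simp only [Φ, sub_self, inner_zero_right, norm_zero] at hmin
  linarith

theorem StrongConvexOn.mul_norm_sub_sq_le_inner (hg : StrongConvexOn univ m g)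
    (hξ : HasSubgradientAt g ξ x) (hη : HasSubgradientAt g η y) :
    m * ‖x - y‖ ^ 2 ≤ ⟪ξ - η, x - y⟫ := by
  have hx := hξ.add_mul_norm_sub_sq_le hg y
  have hy := hη.add_mul_norm_sub_sq_le hg x
  rw [← neg_sub x y, inner_neg_right, norm_neg] at hx
  rw [inner_sub_left]
  linarith

theorem ConvexOn.exists_hasSubgradientAt [FiniteDimensional ℝ E] (hg : ConvexOn ℝ univ g)
    (x : E) : ∃ ξ, HasSubgradientAt g ξ x := by
  have hcont : Continuous g := continuousOn_univ.1 (hg.continuousOn isOpen_univ)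
  have hopen : IsOpen {p : E × ℝ | p.1 ∈ univ ∧ g p.1 < p.2} := by
    simpa using isOpen_lt (hcont.comp continuous_fst) continuous_snd
  obtain ⟨F, hF⟩ := geometric_hahn_banach_open_point hg.convex_strict_epigraph hopen
    (x := (x, g x)) (by simp)
  set ℓ : E →L[ℝ] ℝ := F.comp (.inl ℝ E ℝ)
  set c := F (0, 1)
  have hF_apply : ∀ w t, F (w, t) = ℓ w + t * c := fun w t => by
    rw [show ((w, t) : E × ℝ) = (w, 0) + t • (0, 1) by simp, map_add, map_smul]
    rfl
  have hc : c < 0 := by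
    have := hF (x, g x + 1) (by simp)
    rw [hF_apply, hF_apply] at this
    linarith
  have hsupport : ∀ w, ℓ w - ℓ x ≤ (g w - g x) * -c := by
    intro w
    suffices (ℓ x - ℓ w) / c + g x ≤ g w by
      rw [div_add' _ _ _ hc.ne, div_le_iff_of_neg hc] at this
      linarith
    refine le_of_forall_gt_imp_ge_of_dense fun t ht => ?_
    have := hF (w, t) (by simpa using ht)
    rw [hF_apply, hF_apply] at this
    rw [div_add' _ _ _ hc.ne, div_le_iff_of_neg hc]
    linarith
  refine ⟨(-c)⁻¹ • (InnerProductSpace.toDual ℝ E).symm ℓ, fun w => ?_⟩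
  rw [real_inner_smul_left, InnerProductSpace.toDual_symm_apply, map_sub]
  have : (-c)⁻¹ * (ℓ w - ℓ x) ≤ g w - g x := by
    rw [inv_mul_le_iff₀ (neg_pos.2 hc)]
    linarith [hsupport w]
  linarith

theorem StrongConvexOn.bddBelow_range [FiniteDimensional ℝ E] (hg : StrongConvexOn univ m g)
    (hm : 0 < m) : BddBelow (range g) := by
  obtain ⟨ξ, hξ⟩ := (hg.convexOn hm.le).exists_hasSubgradientAt 0
  refine ⟨g 0 - ‖ξ‖ ^ 2 / (2 * m), ?_⟩
  rintro _ ⟨w, rfl⟩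
  have hw := hξ.add_mul_norm_sub_sq_le hg w
  rw [sub_zero] at hw
  have hcs : -(‖ξ‖ * ‖w‖) ≤ ⟪ξ, w⟫ := neg_le_of_abs_le (abs_real_inner_le_norm ξ w)
  have hamgm : ‖ξ‖ * ‖w‖ - m / 2 * ‖w‖ ^ 2 ≤ ‖ξ‖ ^ 2 / (2 * m) := by
    rw [le_div_iff₀ (by positivity)]
    nlinarith [sq_nonneg (‖ξ‖ - m * ‖w‖)]
  linarith

theorem StrongConvexOn.exists_hasSubgradientAt_lt_norm [Nontrivial E] [FiniteDimensional ℝ E]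
    (hg : StrongConvexOn univ m g) (hm : 0 < m) (L : ℝ) :
    ∃ x ξ, HasSubgradientAt g ξ x ∧ L < ‖ξ‖ := by
  by_contra! hbdd
  set R := (2 * |L| + 1) / m
  obtain ⟨x, hx⟩ := exists_norm_eq E (c := R) (by positivity)
  obtain ⟨ξ, hξ⟩ := (hg.convexOn hm.le).exists_hasSubgradientAt x
  obtain ⟨η, hη⟩ := (hg.convexOn hm.le).exists_hasSubgradientAt 0
  have hmono := hg.mul_norm_sub_sq_le_inner hξ hη
  rw [sub_zero, hx] at hmono
  have hcs : ⟪ξ - η, x⟫ ≤ 2 * |L| * R := calc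
    ⟪ξ - η, x⟫ ≤ ‖ξ - η‖ * ‖x‖ := real_inner_le_norm _ _
    _ ≤ (‖ξ‖ + ‖η‖) * R := by rw [hx]; gcongr; exact norm_sub_le _ _
    _ ≤ 2 * |L| * R := by
      gcongr
      linarith [hbdd x ξ hξ, hbdd 0 η hη, le_abs_self L]
  have hmR : m * R = 2 * |L| + 1 := mul_div_cancel₀ _ hm.ne'
  nlinarith [show 0 < R by positivity]

end Subgradient

theorem ConvexOn.sInf_image_fiber {E E₁ : Type*} [AddCommGroup E] [Module ℝ E] [AddCommGroup E₁]
    [Module ℝ E₁] {A : E →ₗ[ℝ] E₁} (hA : Surjective A) {G : E → ℝ} (hG : ConvexOn ℝ univ G)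
    (hG_bdd : BddBelow (range G)) : ConvexOn ℝ univ fun y => sInf (G '' {v | A v = y}) := by
  have hne : ∀ y, (G '' {v | A v = y}).Nonempty := fun y =>
    let ⟨v, hv⟩ := hA y; ⟨G v, v, hv, rfl⟩
  have hbdd : ∀ y, BddBelow (G '' {v | A v = y}) := fun y =>
    hG_bdd.mono (image_subset_range _ _)
  refine ⟨convex_univ, fun y₁ _ y₂ _ a b ha hb hab => le_of_forall_pos_le_add fun ε hε => ?_⟩
  obtain ⟨_, ⟨v₁, hv₁, rfl⟩, hv₁ε⟩ := exists_lt_of_csInf_lt (hne y₁) (lt_add_of_pos_right _ hε)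
  obtain ⟨_, ⟨v₂, hv₂, rfl⟩, hv₂ε⟩ := exists_lt_of_csInf_lt (hne y₂) (lt_add_of_pos_right _ hε)
  have hA_comb : A (a • v₁ + b • v₂) = a • y₁ + b • y₂ := by
    rw [map_add, map_smul, map_smul, hv₁.out, hv₂.out]
  calc sInf (G '' {v | A v = a • y₁ + b • y₂}) ≤ G (a • v₁ + b • v₂) :=
        csInf_le (hbdd _) (mem_image_of_mem G hA_comb)
    _ ≤ a * G v₁ + b * G v₂ := hG.2 (mem_univ _) (mem_univ _) ha hb hab
    _ ≤ a * (sInf (G '' {v | A v = y₁}) + ε) + b * (sInf (G '' {v | A v = y₂}) + ε) := by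
        gcongr
    _ = a • sInf (G '' {v | A v = y₁}) + b • sInf (G '' {v | A v = y₂}) + ε := by
        rw [smul_eq_mul, smul_eq_mul]; linear_combination ε * hab

section AugmentedLagrangian

variable {E E₁ : Type*} [NormedAddCommGroup E] [InnerProductSpace ℝ E] [FiniteDimensional ℝ E]
  [NormedAddCommGroup E₁] [InnerProductSpace ℝ E₁] [FiniteDimensional ℝ E₁]
  {A : E →ₗ[ℝ] E₁} {G : E → ℝ}

theorem ConvexOn.exists_lagrange_multiplier (hA : Surjective A) (hG : ConvexOn ℝ univ G)
    (hG_bdd : BddBelow (range G)) {vb : E} (hvb : ∀ w, A w = A vb → G vb ≤ G w) :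
    ∃ p, HasSubgradientAt G (LinearMap.adjoint A p) vb := by
  set V : E₁ → ℝ := fun y => sInf (G '' {v | A v = y})
  have hV_le : ∀ w, V (A w) ≤ G w := fun w =>
    csInf_le (hG_bdd.mono (image_subset_range _ _)) ⟨w, rfl, rfl⟩
  have hV_vb : G vb ≤ V (A vb) :=
    le_csInf ⟨G vb, vb, rfl, rfl⟩ (by rintro _ ⟨w, hw, rfl⟩; exact hvb w hw)
  obtain ⟨p, hp⟩ := (hG.sInf_image_fiber hA hG_bdd).exists_hasSubgradientAt (A vb)
  refine ⟨p, fun w => ?_⟩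
  rw [LinearMap.adjoint_inner_left, map_sub]
  linarith [hp (A w), hV_le w]

theorem ConvexOn.hasSubgradientAt_of_isMinimizer_augmented (hG : ConvexOn ℝ univ G) {f q : E₁}
    {lam : ℝ} {v : E}
    (hv : ∀ w, G v - ⟪q, A v⟫ + lam * ‖A v - f‖ ^ 2 ≤ G w - ⟪q, A w⟫ + lam * ‖A w - f‖ ^ 2) :
    HasSubgradientAt G (LinearMap.adjoint A (q + (2 * lam) • (f - A v))) v := by
  intro w
  set ξ := LinearMap.adjoint A (q + (2 * lam) • (f - A v))
  have hΦ : ConvexOn ℝ univ fun w => G w - ⟪ξ, w - v⟫ := by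
    refine ((hG.add ((-innerₛₗ ℝ ξ).convexOn convex_univ)).add_const ⟪ξ, v⟫).congr
      fun w _ => ?_
    simp only [Pi.add_apply, LinearMap.neg_apply, innerₛₗ_apply_apply, inner_sub_right]
    ring
  have hmin := hΦ.le_of_forall_le_add_sq_mul (x := v) (w := w)
    (C := lam * ‖A (w - v)‖ ^ 2) fun t _ => by
      have := hv (v + t • (w - v))
      simp only [ξ, add_sub_cancel_left, sub_self, inner_zero_right, inner_smul_right,
        LinearMap.adjoint_inner_left, map_add, map_smul, inner_add_left, inner_add_right,
        real_inner_smul_left] at this ⊢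
      rw [show A v + t • A (w - v) - f = (A v - f) + t • A (w - v) by abel, norm_add_sq_real,
        norm_smul, real_inner_smul_right, Real.norm_eq_abs, mul_pow, sq_abs] at this
      rw [← neg_sub (A v) f, inner_neg_left]
      linarith
  simp only [sub_self, inner_zero_right, sub_zero] at hmin
  linarith

theorem StrongConvexOn.mul_norm_sub_sq_le_of_augmentedLagrangian {ν lam : ℝ}
    (hG : StrongConvexOn univ ν G) (hν : 0 ≤ ν) (hlam : 0 ≤ lam) {f p : E₁} {vb : E}
    (hvb : A vb = f) (hp : HasSubgradientAt G (LinearMap.adjoint A p) vb) {v : ℕ → E}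
    {q : ℕ → E₁}
    (hv : ∀ k w, G (v (k + 1)) - ⟪q k, A (v (k + 1))⟫ + lam * ‖A (v (k + 1)) - f‖ ^ 2 ≤
      G w - ⟪q k, A w⟫ + lam * ‖A w - f‖ ^ 2)
    (hq : ∀ k, q (k + 1) = q k + (2 * lam) • (f - A (v (k + 1)))) (k : ℕ) :
    ν * ‖v (k + 1) - vb‖ ^ 2 ≤ (‖q 0‖ + ‖p‖) * ‖A (v (k + 1)) - f‖ := by
  have hsub : ∀ k, HasSubgradientAt G (LinearMap.adjoint A (q (k + 1))) (v (k + 1)) := fun k =>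
    hq k ▸ (hG.convexOn hν).hasSubgradientAt_of_isMinimizer_augmented (hv k)
  have hgap : ∀ k, ν * ‖v (k + 1) - vb‖ ^ 2 ≤ ⟪q (k + 1) - p, A (v (k + 1)) - f⟫ := fun k => by
    have := hG.mul_norm_sub_sq_le_inner (hsub k) hp
    rwa [← map_sub, LinearMap.adjoint_inner_left, map_sub, hvb] at this
  have hfejer : ∀ k, ‖q k - p‖ ≤ ‖q 0 - p‖ := by
    intro k
    induction k with
    | zero => rfl
    | succ k ih =>
      refine le_trans ?_ ih
      have hstep : q k - p = (q (k + 1) - p) + (2 * lam) • (A (v (k + 1)) - f) := by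
        rw [hq k]; module
      have hacute : 0 ≤ ⟪q (k + 1) - p, (2 * lam) • (A (v (k + 1)) - f)⟫ := by
        rw [real_inner_smul_right]
        exact mul_nonneg (by positivity) ((mul_nonneg hν (sq_nonneg _)).trans (hgap k))
      rw [hstep, ← pow_le_pow_iff_left₀ (norm_nonneg _) (norm_nonneg _) two_ne_zero,
        norm_add_sq_real]
      nlinarith [sq_nonneg ‖(2 * lam) • (A (v (k + 1)) - f)‖]
  calc ν * ‖v (k + 1) - vb‖ ^ 2 ≤ ⟪q (k + 1) - p, A (v (k + 1)) - f⟫ := hgap k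
    _ ≤ ‖q (k + 1) - p‖ * ‖A (v (k + 1)) - f‖ := real_inner_le_norm _ _
    _ ≤ (‖q 0‖ + ‖p‖) * ‖A (v (k + 1)) - f‖ := by
      gcongr
      exact (hfejer (k + 1)).trans (norm_sub_le _ _)

end AugmentedLagrangian

theorem statement4 {E E₁ : Type*}
    [NormedAddCommGroup E] [InnerProductSpace ℝ E] [FiniteDimensional ℝ E]
    [NormedAddCommGroup E₁] [InnerProductSpace ℝ E₁] [FiniteDimensional ℝ E₁]
    (A : E →ₗ[ℝ] E₁) (hA : Function.Surjective A)
    (δ : ℝ) (hδ : 0 < δ) (hAlow : ∀ w : E₁, δ * ‖w‖ ≤ ‖(LinearMap.adjoint A) w‖)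
    (f : E₁) (lam ν ω : ℝ) (hlam : 0 < lam) (hν : 0 < ν)
    (J : E → ℝ) (hJ0 : ∀ v, 0 ≤ J v)
    (hsc : ∀ u : E, ConvexOn ℝ Set.univ
      (fun v => (J v + ω * ‖v - u‖ ^ 2) - ν / 2 * ‖v‖ ^ 2))
    (Kt Lt : ℝ) (hKt : 0 ≤ Kt) (hLt : 0 ≤ Lt)
    (hgrowth : ∀ (u v ξ : E),
      (∀ w, (J v + ω * ‖v - u‖ ^ 2) + ⟪ξ, w - v⟫ ≤ J w + ω * ‖w - u‖ ^ 2) →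
      ‖ξ‖ ≤ Kt * (J v + ω * ‖v - u‖ ^ 2) + Lt)
    (vbar : E → E) (hvbarf : ∀ u, A (vbar u) = f)
    (hvbarmin : ∀ u w, A w = f →
      J (vbar u) + ω * ‖vbar u - u‖ ^ 2 ≤ J w + ω * ‖w - u‖ ^ 2) :
    ∃ C₁ C₂ : ℝ, 0 < C₁ ∧ 0 < C₂ ∧
      ∀ (u : E) (v : ℕ → E) (q : ℕ → E₁),
        (∀ k : ℕ, ∀ w,
          (J (v (k + 1)) + ω * ‖v (k + 1) - u‖ ^ 2) - ⟪q k, A (v (k + 1))⟫ +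
              lam * ‖A (v (k + 1)) - f‖ ^ 2 ≤
            (J w + ω * ‖w - u‖ ^ 2) - ⟪q k, A w⟫ + lam * ‖A w - f‖ ^ 2) →
        (∀ k : ℕ, q (k + 1) = q k + (2 * lam) • (f - A (v (k + 1)))) →
        ∀ k : ℕ, ‖v (k + 1) - vbar u‖ ^ 2 ≤
          (C₁ * (1 + ‖q 0‖) + C₂ * (J (vbar u) + ω * ‖vbar u - u‖ ^ 2)) *
            ‖A (v (k + 1)) - f‖ := by
  rcases subsingleton_or_nontrivial E with hE | hE
  · refine ⟨1, 1, one_pos, one_pos, fun u v q _ _ k => ?_⟩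
    rw [Subsingleton.elim (v (k + 1)) (vbar u), Subsingleton.elim (vbar u) u, sub_self,
      norm_zero, zero_pow two_ne_zero]
    exact mul_nonneg (by linarith [hJ0 u, norm_nonneg (q 0)]) (norm_nonneg _)
  have hKt_pos : 0 < Kt := hKt.lt_of_ne fun hKt0 => by
    subst hKt0
    obtain ⟨x, ξ, hξ, hlt⟩ :=
      (strongConvexOn_iff_convex.2 (hsc 0)).exists_hasSubgradientAt_lt_norm hν Lt
    linarith [hgrowth 0 x ξ hξ]
  refine ⟨(1 + Lt / δ) / ν, Kt / (ν * δ), by positivity, by positivity, fun u v q hv hq k => ?_⟩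
  have hG := strongConvexOn_iff_convex.2 (hsc u)
  obtain ⟨p, hp⟩ := (hG.convexOn hν.le).exists_lagrange_multiplier hA (hG.bddBelow_range hν)
    fun w hw => hvbarmin u w (hw.trans (hvbarf u))
  have hp_norm : ‖p‖ ≤ (Kt * (J (vbar u) + ω * ‖vbar u - u‖ ^ 2) + Lt) / δ := by
    rw [le_div_iff₀' hδ]
    exact (hAlow p).trans (hgrowth u _ _ hp)
  have hest := hG.mul_norm_sub_sq_le_of_augmentedLagrangian hν.le hlam.le (hvbarf u) hp hv hq k
  refine le_of_mul_le_mul_left (hest.trans ?_) hν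
  rw [← mul_assoc]
  gcongr
  have hsplit : ν * ((1 + Lt / δ) / ν * (1 + ‖q 0‖)
      + Kt / (ν * δ) * (J (vbar u) + ω * ‖vbar u - u‖ ^ 2))
      = ‖q 0‖ + (Kt * (J (vbar u) + ω * ‖vbar u - u‖ ^ 2) + Lt) / δ
        + (1 + Lt / δ * ‖q 0‖) := by
    field_simp
    ring
  rw [hsplit]
  have : 0 ≤ Lt / δ * ‖q 0‖ := by positivity
  linarith
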